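/- arXiv:1003.3895 — 2 statements merged into one kernel-verified Lean document; each statement's English description precedes it below -/
import Mathlib

section
/- Weak lower semicontinuity of the state-dependent quadratic control cost: Let 𝒦 : ℝ^{2m} → M_m(ℝ) be a continuous map taking values in symmetric positive semidefinite matrices. Let (qⁿ) be a sequence in C([0,T], ℝ^{2m}) converging uniformly to q^∞, and let (uⁿ) be a sequence in L²([0,T], ℝ^m) converging weakly to u^∞. Then ∫₀^T ⟨𝒦_{q^∞_s} u^∞_s, u^∞_s⟩ ds ≤ liminf_{n→∞} ∫₀^T ⟨𝒦_{qⁿ_s} uⁿ_s, uⁿ_s⟩ ds. -/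
open MeasureTheory Filter Set
open scoped RealInnerProductSpace Topology

/-!
A weakly convergent sequence in `L²` is bounded (Banach–Steinhaus), and `𝒦 ∘ qⁿ → 𝒦 ∘ q^∞`
uniformly, so the cost of `(qⁿ, uⁿ)` differs from `∫ ⟪𝒦_{q^∞} uⁿ, uⁿ⟫` by `o(1)`. Since each
`𝒦_{q^∞_s}` is positive, this quadratic form dominates its tangent at `u^∞`,
`2 ∫ ⟪uⁿ, 𝒦_{q^∞} u^∞⟫ - ∫ ⟪𝒦_{q^∞} u^∞, u^∞⟫`, which converges to the cost of `(q^∞, u^∞)` by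
weak convergence.
-/

theorem Continuous.comp_tendstoUniformlyOn_of_isCompact_image {ι α X Y : Type*}
    [PseudoMetricSpace X] [ProperSpace X] [UniformSpace Y] {g : X → Y} (hg : Continuous g)
    {F : ι → α → X} {f : α → X} {p : Filter ι} {t : Set α} (hft : IsCompact (f '' t))
    (h : TendstoUniformlyOn F f p t) :
    TendstoUniformlyOn (fun i x => g (F i x)) (fun x => g (f x)) p t := by
  -- `g` is uniformly continuous on this compact set, which eventually contains every `F i x`
  have hK : IsCompact (Metric.cthickening 1 (f '' t)) := hft.cthickening
  refine (hK.uniformContinuousOn_of_continuous hg.continuousOn).comp_tendstoUniformlyOn_eventually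
    ?_ (fun x hx => Metric.self_subset_cthickening _ (mem_image_of_mem f hx)) h
  filter_upwards [Metric.tendstoUniformlyOn_iff.1 h 1 one_pos] with i hi x hx
  exact Metric.mem_cthickening_of_dist_le _ (f x) 1 _ (mem_image_of_mem f hx)
    (dist_comm (F i x) (f x) ▸ (hi x hx).le)

section InnerProductSpace

variable {E : Type*} [NormedAddCommGroup E] [InnerProductSpace ℝ E]

theorem ContinuousLinearMap.IsPositive.two_mul_inner_sub_inner_le {T : E →L[ℝ] E}
    (hT : T.IsPositive) (u v : E) : 2 * ⟪u, T v⟫ - ⟪T v, v⟫ ≤ ⟪T u, u⟫ := by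
  have hnonneg := hT.inner_nonneg_left (u - v)
  have hsymm := hT.inner_left_eq_inner_right u v
  rw [map_sub, inner_sub_left, inner_sub_right, inner_sub_right] at hnonneg
  linarith [real_inner_comm u (T v)]

variable {α : Type*} [MeasurableSpace α] {μ : Measure α}

namespace MeasureTheory.MemLp

theorem inner_toLp {u v : α → E} (hu : MemLp u 2 μ) (hv : MemLp v 2 μ) :
    ⟪hu.toLp u, hv.toLp v⟫ = ∫ s, ⟪u s, v s⟫ ∂μ := by
  rw [L2.inner_def]
  refine integral_congr_ae ?_
  filter_upwards [hu.coeFn_toLp, hv.coeFn_toLp] with s hus hvs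
  rw [hus, hvs]

theorem integrable_inner {u v : α → E} (hu : MemLp u 2 μ) (hv : MemLp v 2 μ) :
    Integrable (fun s => ⟪u s, v s⟫) μ := by
  refine (L2.integrable_inner (𝕜 := ℝ) (hu.toLp u) (hv.toLp v)).congr ?_
  filter_upwards [hu.coeFn_toLp, hv.coeFn_toLp] with s hus hvs
  rw [hus, hvs]

theorem clm_apply_of_ae_norm_le {F : Type*} [NormedAddCommGroup F] [NormedSpace ℝ F]
    {p : ENNReal} {A : α → E →L[ℝ] F} {v : α → E} {B : ℝ} (hv : MemLp v p μ)
    (hA : AEStronglyMeasurable A μ) (hAB : ∀ᵐ s ∂μ, ‖A s‖ ≤ B) :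
    MemLp (fun s => A s (v s)) p μ := by
  refine hv.of_le_mul (c := B) ?_ ?_
  · exact isBoundedBilinearMap_apply.continuous.comp_aestronglyMeasurable
      (hA.prodMk hv.aestronglyMeasurable)
  · filter_upwards [hAB] with s hs
    exact ((A s).le_opNorm (v s)).trans (mul_le_mul_of_nonneg_right hs (norm_nonneg _))

end MeasureTheory.MemLp

theorem exists_integral_norm_sq_le_of_bddAbove_integral_inner [CompleteSpace E] {ι : Type*}
    {u : ι → α → E} (hu : ∀ i, MemLp (u i) 2 μ)
    (hweak : ∀ φ : α → E, MemLp φ 2 μ → BddAbove (range fun i => |∫ s, ⟪u i s, φ s⟫ ∂μ|)) :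
    ∃ C, ∀ i, ∫ s, ‖u i s‖ ^ 2 ∂μ ≤ C := by
  have hpointwise : ∀ φ : Lp E 2 μ, ∃ C, ∀ i, ‖innerSL ℝ ((hu i).toLp (u i)) φ‖ ≤ C := by
    intro φ
    obtain ⟨C, hC⟩ := hweak φ (Lp.memLp φ)
    refine ⟨C, fun i => ?_⟩
    have hφ : (Lp.memLp φ).toLp φ = φ := Lp.toLp_coeFn φ (Lp.memLp φ)
    rw [innerSL_apply_apply, ← hφ, MemLp.inner_toLp, Real.norm_eq_abs]
    exact hC (mem_range_self i)
  obtain ⟨C, hC⟩ := banach_steinhaus (g := fun i => innerSL ℝ ((hu i).toLp (u i))) hpointwise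
  refine ⟨C ^ 2, fun i => ?_⟩
  have hnorm := hC i
  rw [innerSL_apply_norm] at hnorm
  calc ∫ s, ‖u i s‖ ^ 2 ∂μ = ‖(hu i).toLp (u i)‖ ^ 2 := by
        simp only [← real_inner_self_eq_norm_sq, MemLp.inner_toLp]
    _ ≤ C ^ 2 := pow_le_pow_left₀ (norm_nonneg _) hnorm 2

theorem abs_integral_inner_clm_apply_le {A : α → E →L[ℝ] E} {u : α → E} {ε : ℝ}
    (hu : Integrable (fun s => ‖u s‖ ^ 2) μ) (hA : ∀ᵐ s ∂μ, ‖A s‖ ≤ ε) :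
    |∫ s, ⟪A s (u s), u s⟫ ∂μ| ≤ ε * ∫ s, ‖u s‖ ^ 2 ∂μ := by
  rw [← Real.norm_eq_abs, ← integral_const_mul]
  refine norm_integral_le_of_norm_le (hu.const_mul ε) ?_
  filter_upwards [hA] with s hs
  calc ‖⟪A s (u s), u s⟫‖ ≤ ‖A s (u s)‖ * ‖u s‖ := norm_inner_le_norm _ _
    _ ≤ ‖A s‖ * ‖u s‖ * ‖u s‖ := by gcongr; exact (A s).le_opNorm _
    _ ≤ ε * ‖u s‖ ^ 2 := by rw [sq, ← mul_assoc]; gcongr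

theorem tendsto_integral_inner_clm_apply_sub {ι : Type*} {l : Filter ι}
    {A : ι → α → E →L[ℝ] E} {A₀ : α → E →L[ℝ] E} {u : ι → α → E} {C : ℝ}
    (hA : TendstoUniformlyOnFilter A A₀ l (ae μ))
    (hAint : ∀ᶠ i in l, Integrable (fun s => ⟪A i s (u i s), u i s⟫) μ)
    (hA₀int : ∀ i, Integrable (fun s => ⟪A₀ s (u i s), u i s⟫) μ)
    (hu : ∀ i, Integrable (fun s => ‖u i s‖ ^ 2) μ) (hC : ∀ i, ∫ s, ‖u i s‖ ^ 2 ∂μ ≤ C) :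
    Tendsto (fun i => ∫ s, ⟪A i s (u i s), u i s⟫ ∂μ - ∫ s, ⟪A₀ s (u i s), u i s⟫ ∂μ) l
      (𝓝 0) := by
  rw [Metric.tendsto_nhds]
  intro ε hε
  have hδ : 0 < ε / (|C| + 1) := by positivity
  filter_upwards [hAint, (Metric.tendstoUniformlyOnFilter_iff.1 hA _ hδ).curry] with i hi hclose
  have hdiff : ∀ᵐ s ∂μ, ‖A i s - A₀ s‖ ≤ ε / (|C| + 1) := by
    filter_upwards [hclose] with s hs
    rw [dist_comm, dist_eq_norm] at hs
    exact hs.le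
  rw [Real.dist_eq, sub_zero, ← integral_sub hi (hA₀int i)]
  simp only [← inner_sub_left, ← sub_apply]
  calc _ ≤ ε / (|C| + 1) * ∫ s, ‖u i s‖ ^ 2 ∂μ := abs_integral_inner_clm_apply_le (hu i) hdiff
    _ ≤ ε / (|C| + 1) * |C| := by gcongr; exact (hC i).trans (le_abs_self C)
    _ < ε := by
      rw [div_mul_eq_mul_div, div_lt_iff₀ (by positivity)]
      linarith

theorem integral_inner_clm_apply_le_liminf [CompleteSpace E]
    {A : ℕ → α → E →L[ℝ] E} {A₀ : α → E →L[ℝ] E} {u : ℕ → α → E} {u₀ : α → E} {B : ℝ}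
    (hAmeas : ∀ k, AEStronglyMeasurable (A k) μ) (hA₀meas : AEStronglyMeasurable A₀ μ)
    (hA₀bdd : ∀ᵐ s ∂μ, ‖A₀ s‖ ≤ B) (hA₀pos : ∀ᵐ s ∂μ, (A₀ s).IsPositive)
    (hA : TendstoUniformlyOnFilter A A₀ atTop (ae μ))
    (hu : ∀ k, MemLp (u k) 2 μ) (hu₀ : MemLp u₀ 2 μ)
    (hweak : ∀ φ : α → E, MemLp φ 2 μ →
      Tendsto (fun k => ∫ s, ⟪u k s, φ s⟫ ∂μ) atTop (𝓝 (∫ s, ⟪u₀ s, φ s⟫ ∂μ))) :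
    ∫ s, ⟪A₀ s (u₀ s), u₀ s⟫ ∂μ ≤ liminf (fun k => ∫ s, ⟪A k s (u k s), u k s⟫ ∂μ) atTop := by
  obtain ⟨C, hC⟩ := exists_integral_norm_sq_le_of_bddAbove_integral_inner hu
    fun φ hφ => (hweak φ hφ).abs.bddAbove_range
  have husq : ∀ k, Integrable (fun s => ‖u k s‖ ^ 2) μ :=
    fun k => (memLp_two_iff_integrable_sq_norm (hu k).1).1 (hu k)
  have hA₀u : ∀ {v : α → E}, MemLp v 2 μ → MemLp (fun s => A₀ s (v s)) 2 μ :=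
    fun hv => hv.clm_apply_of_ae_norm_le hA₀meas hA₀bdd
  have hAbdd : ∀ᶠ k in atTop, ∀ᵐ s ∂μ, ‖A k s‖ ≤ |B| + 1 := by
    filter_upwards [(Metric.tendstoUniformlyOnFilter_iff.1 hA 1 one_pos).curry] with k hk
    filter_upwards [hk, hA₀bdd] with s hclose hbdd
    rw [dist_comm, dist_eq_norm] at hclose
    linarith [norm_le_norm_sub_add (A k s) (A₀ s), le_abs_self B]
  have hAint : ∀ᶠ k in atTop, Integrable (fun s => ⟪A k s (u k s), u k s⟫) μ := by
    filter_upwards [hAbdd] with k hk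
    exact ((hu k).clm_apply_of_ae_norm_le (hAmeas k) hk).integrable_inner (hu k)
  set I := fun k => ∫ s, ⟪A k s (u k s), u k s⟫ ∂μ
  set J := fun k => ∫ s, ⟪A₀ s (u k s), u k s⟫ ∂μ
  set L := fun k => ∫ s, ⟪u k s, A₀ s (u₀ s)⟫ ∂μ
  set c := ∫ s, ⟪A₀ s (u₀ s), u₀ s⟫ ∂μ
  have hIJ : Tendsto (fun k => I k - J k) atTop (𝓝 0) :=
    tendsto_integral_inner_clm_apply_sub hA hAint
      (fun k => (hA₀u (hu k)).integrable_inner (hu k)) husq hC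
  have hL : Tendsto L atTop (𝓝 c) := by
    have hc : ∫ s, ⟪u₀ s, A₀ s (u₀ s)⟫ ∂μ = c :=
      integral_congr_ae (.of_forall fun s => real_inner_comm _ _)
    simpa only [hc] using hweak _ (hA₀u hu₀)
  -- the quadratic form of `A₀ s` lies above its tangent at `u₀ s`
  have hLJ : ∀ k, 2 * L k - c ≤ J k := by
    intro k
    have hLint := ((hu k).integrable_inner (hA₀u hu₀)).const_mul 2
    have hcint := (hA₀u hu₀).integrable_inner hu₀
    rw [← integral_const_mul, ← integral_sub hLint hcint]
    refine integral_mono_ae (hLint.sub hcint) ((hA₀u (hu k)).integrable_inner (hu k)) ?_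
    filter_upwards [hA₀pos] with s hs
    exact hs.two_mul_inner_sub_inner_le _ _
  have hlower : Tendsto (fun k => 2 * L k - c + (I k - J k)) atTop (𝓝 c) := by
    convert ((hL.const_mul 2).sub_const c).add hIJ using 2
    ring
  have hIbdd : IsBoundedUnder (· ≤ ·) atTop I := by
    refine isBoundedUnder_of_eventually_le (a := (|B| + 1) * C) ?_
    filter_upwards [hAbdd] with k hk
    calc I k ≤ |I k| := le_abs_self _
      _ ≤ (|B| + 1) * ∫ s, ‖u k s‖ ^ 2 ∂μ := abs_integral_inner_clm_apply_le (husq k) hk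
      _ ≤ (|B| + 1) * C := by gcongr; exact hC k
  calc c = liminf (fun k => 2 * L k - c + (I k - J k)) atTop := hlower.liminf_eq.symm
    _ ≤ liminf I atTop :=
      liminf_le_liminf (.of_forall fun k => by linarith [hLJ k]) hlower.isBoundedUnder_ge
        hIbdd.isCoboundedUnder_ge

end InnerProductSpace

theorem stmt6_general (m : ℕ) (T : ℝ)
    (𝒦 : EuclideanSpace ℝ (Fin (2 * m)) →
      (EuclideanSpace ℝ (Fin m) →L[ℝ] EuclideanSpace ℝ (Fin m)))
    (h𝒦cont : Continuous 𝒦)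
    (h𝒦symm : ∀ q u v, ⟪𝒦 q u, v⟫ = ⟪u, 𝒦 q v⟫)
    (h𝒦pos : ∀ q u, 0 ≤ ⟪𝒦 q u, u⟫)
    (qseq : ℕ → ℝ → EuclideanSpace ℝ (Fin (2 * m)))
    (qlim : ℝ → EuclideanSpace ℝ (Fin (2 * m)))
    (hqcont : ∀ k, ContinuousOn (qseq k) (Set.Icc 0 T))
    (hqconv : TendstoUniformlyOn qseq qlim atTop (Set.Icc 0 T))
    (useq : ℕ → ℝ → EuclideanSpace ℝ (Fin m))
    (ulim : ℝ → EuclideanSpace ℝ (Fin m))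
    (huseq : ∀ k, MemLp (useq k) 2 (volume.restrict (Set.Icc 0 T)))
    (hulim : MemLp ulim 2 (volume.restrict (Set.Icc 0 T)))
    (huconv : ∀ φ : ℝ → EuclideanSpace ℝ (Fin m),
      MemLp φ 2 (volume.restrict (Set.Icc 0 T)) →
      Tendsto (fun k => ∫ s in Set.Icc (0:ℝ) T, ⟪useq k s, φ s⟫) atTop
        (𝓝 (∫ s in Set.Icc (0:ℝ) T, ⟪ulim s, φ s⟫))) :
    (∫ s in Set.Icc (0:ℝ) T, ⟪𝒦 (qlim s) (ulim s), ulim s⟫) ≤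
      Filter.liminf (fun k => ∫ s in Set.Icc (0:ℝ) T, ⟪𝒦 (qseq k s) (useq k s), useq k s⟫)
        atTop := by
  have hqlimcont : ContinuousOn qlim (Icc 0 T) := hqconv.continuousOn (.of_forall hqcont)
  have h𝒦qlim : ContinuousOn (fun s => 𝒦 (qlim s)) (Icc 0 T) :=
    h𝒦cont.comp_continuousOn hqlimcont
  obtain ⟨B, hB⟩ := isCompact_Icc.exists_bound_of_continuousOn h𝒦qlim
  have h𝒦conv : TendstoUniformlyOn (fun k s => 𝒦 (qseq k s)) (fun s => 𝒦 (qlim s)) atTop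
      (Icc 0 T) :=
    h𝒦cont.comp_tendstoUniformlyOn_of_isCompact_image
      (isCompact_Icc.image_of_continuousOn hqlimcont) hqconv
  exact integral_inner_clm_apply_le_liminf
    (fun k => (h𝒦cont.comp_continuousOn (hqcont k)).aestronglyMeasurable measurableSet_Icc)
    (h𝒦qlim.aestronglyMeasurable measurableSet_Icc)
    ((ae_restrict_iff' measurableSet_Icc).2 (.of_forall hB))
    (.of_forall fun s => (𝒦 (qlim s)).isPositive_iff.2 ⟨h𝒦symm _, h𝒦pos _⟩)
    (h𝒦conv.tendstoUniformlyOnFilter.mono_right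
      (le_principal_iff.2 (ae_restrict_mem measurableSet_Icc)))
    huseq hulim huconv

/-- weak lower semicontinuity of the state-dependent quadratic
control cost along uniformly convergent states and weakly convergent controls. -/
theorem stmt6 (m : ℕ) (hm : 1 ≤ m) (T : ℝ) (hT : 0 < T)
    (𝒦 : EuclideanSpace ℝ (Fin (2 * m)) →
      (EuclideanSpace ℝ (Fin m) →L[ℝ] EuclideanSpace ℝ (Fin m)))
    (h𝒦cont : Continuous 𝒦)
    (h𝒦symm : ∀ q u v, ⟪𝒦 q u, v⟫ = ⟪u, 𝒦 q v⟫)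
    (h𝒦pos : ∀ q u, 0 ≤ ⟪𝒦 q u, u⟫)
    (qseq : ℕ → ℝ → EuclideanSpace ℝ (Fin (2 * m)))
    (qlim : ℝ → EuclideanSpace ℝ (Fin (2 * m)))
    (hqcont : ∀ k, ContinuousOn (qseq k) (Set.Icc 0 T))
    (hqlimcont : ContinuousOn qlim (Set.Icc 0 T))
    (hqconv : TendstoUniformlyOn qseq qlim atTop (Set.Icc 0 T))
    (useq : ℕ → ℝ → EuclideanSpace ℝ (Fin m))
    (ulim : ℝ → EuclideanSpace ℝ (Fin m))
    (huseq : ∀ k, MemLp (useq k) 2 (volume.restrict (Set.Icc 0 T)))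
    (hulim : MemLp ulim 2 (volume.restrict (Set.Icc 0 T)))
    (huconv : ∀ φ : ℝ → EuclideanSpace ℝ (Fin m),
      MemLp φ 2 (volume.restrict (Set.Icc 0 T)) →
      Tendsto (fun k => ∫ s in Set.Icc (0:ℝ) T, ⟪useq k s, φ s⟫) atTop
        (𝓝 (∫ s in Set.Icc (0:ℝ) T, ⟪ulim s, φ s⟫))) :
    (∫ s in Set.Icc (0:ℝ) T, ⟪𝒦 (qlim s) (ulim s), ulim s⟫) ≤
      Filter.liminf (fun k => ∫ s in Set.Icc (0:ℝ) T, ⟪𝒦 (qseq k s) (useq k s), useq k s⟫)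
        atTop :=
  stmt6_general m T 𝒦 h𝒦cont h𝒦symm h𝒦pos qseq qlim hqcont hqconv useq ulim huseq hulim huconv
end

section
/- Differentiability of the kernel feature map (appendix lemma): Let W be a real Hilbert space, K_W : ℝ^d × ℝ^d → ℝ a function of class C², and Φ : ℝ^d → W a map satisfying ⟨Φ(z_1), Φ(z_2)⟩_W = K_W(z_1,z_2) for all z_1, z_2 ∈ ℝ^d. Then Φ is differentiable at every point of ℝ^d, and its differential satisfies, for all z_1, z_2 ∈ ℝ^d and h_1, h_2 ∈ ℝ^d: ⟨DΦ(z_1) h_1, DΦ(z_2) h_2⟩_W = ∂_1∂_2 K_W(z_1,z_2)·(h_1, h_2), where ∂_1∂_2 K_W(z_1,z_2) denotes the mixed second derivative of K_W, a bilinear form on ℝ^d × ℝ^d. -/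
open scoped RealInnerProductSpace

noncomputable section

/-- The mixed second derivative `∂₁∂₂ K_W(z₁,z₂)·(h₁,h₂)`. -/
def mixedDeriv {d : ℕ} (KW : EuclideanSpace ℝ (Fin d) → EuclideanSpace ℝ (Fin d) → ℝ)
    (z1 z2 h1 h2 : EuclideanSpace ℝ (Fin d)) : ℝ :=
  fderiv ℝ (fun w => (fderiv ℝ (fun z => KW z w) z1) h1) z2 h2

/-!
By the kernel identity, `⟪Φ (z₁ + v) - Φ z₁, Φ (z₂ + w) - Φ z₂⟫` is the mixed second difference
of `K_W`, which for a `C²` kernel is `∂₁∂₂K_W(z₁,z₂)(v, w) + o(‖v‖ ‖w‖)`. Hence the inner products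
of the difference quotients `t⁻¹ (Φ (z + t h) - Φ z)` converge, so these quotients are Cauchy as
`t → 0` and converge in the complete space `W`. The limits have Gram form `∂₁∂₂K_W`, which forces
them to depend linearly and boundedly on `h`, and expanding `‖Φ (z + h) - Φ z - D h‖²` with the
same estimate shows that it is `o(‖h‖²)`.
-/

open Filter Set Topology Metric ContinuousLinearMap

section MixedSecondDifference

variable {E G : Type*} [NormedAddCommGroup E] [NormedSpace ℝ E]
  [NormedAddCommGroup G] [NormedSpace ℝ G]

def HasMixedSecondDiffAt (f : E → E → G) (B : E →L[ℝ] E →L[ℝ] G) (z₁ z₂ : E) : Prop :=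
  ∀ ε > 0, ∃ δ > 0, ∀ v w : E, ‖v‖ ≤ δ → ‖w‖ ≤ δ →
    ‖f (z₁ + v) (z₂ + w) - f (z₁ + v) z₂ - f z₁ (z₂ + w) + f z₁ z₂ - B v w‖ ≤ ε * (‖v‖ * ‖w‖)

/-- Here `B v w = ∂²F(z₁, z₂) (0, w) (v, 0)`, the order in which `mixedDeriv` differentiates. -/
theorem ContDiff.hasMixedSecondDiffAt {F : E × E → G} (hF : ContDiff ℝ 2 F) (z₁ z₂ : E) :
    HasMixedSecondDiffAt (fun x y => F (x, y))
      ((fderiv ℝ (fderiv ℝ F) (z₁, z₂)).bilinearComp (inr ℝ E E) (inl ℝ E E)).flip z₁ z₂ := by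
  intro ε hε
  have hdiff : Differentiable ℝ F := hF.differentiable (by norm_num)
  have hstrict : HasStrictFDerivAt (fderiv ℝ F) (fderiv ℝ (fderiv ℝ F) (z₁, z₂)) (z₁, z₂) :=
    (hF.fderiv_right (m := 1) (by norm_num)).contDiffAt.hasStrictFDerivAt one_ne_zero
  obtain ⟨s, hs, happrox⟩ := hstrict.approximates_deriv_on_nhds (c := ⟨ε, hε.le⟩) (Or.inr hε)
  obtain ⟨δ, hδ, hball⟩ := nhds_basis_closedBall.mem_iff.1 hs
  refine ⟨δ, hδ, fun v w hv hw => ?_⟩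
  set D2 := fderiv ℝ (fderiv ℝ F) (z₁, z₂)
  -- Mean value inequality in `x`, with the derivative bounded through the strict
  -- differentiability of `fderiv ℝ F` at `(z₁, z₂)`.
  have hderiv : ∀ x ∈ closedBall z₁ δ, HasFDerivWithinAt
      (fun x => F (x, z₂ + w) - F (x, z₂) - D2 (0, w) (x, 0))
      ((fderiv ℝ F (x, z₂ + w) - fderiv ℝ F (x, z₂) - D2 (0, w)).comp (inl ℝ E E))
      (closedBall z₁ δ) x := by
    intro x _
    have h1 := (hdiff (x, z₂ + w)).hasFDerivAt.comp x
      (hasFDerivAt_prodMk_left (𝕜 := ℝ) x (z₂ + w))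
    have h2 := (hdiff (x, z₂)).hasFDerivAt.comp x
      (hasFDerivAt_prodMk_left (𝕜 := ℝ) x z₂)
    have h3 := ((D2 (0, w)).comp (inl ℝ E E)).hasFDerivAt (x := x)
    exact ((h1.sub h2).sub h3).hasFDerivWithinAt
  have hbound : ∀ x ∈ closedBall z₁ δ,
      ‖(fderiv ℝ F (x, z₂ + w) - fderiv ℝ F (x, z₂) - D2 (0, w)).comp (inl ℝ E E)‖ ≤ ε * ‖w‖ := by
    intro x hx
    have hmem : ∀ y ∈ closedBall z₂ δ, (x, y) ∈ s := fun y hy =>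
      hball (closedBall_prod_same z₁ z₂ δ ▸ mk_mem_prod hx hy)
    have key := happrox _ (hmem (z₂ + w) (by simpa [mem_closedBall_iff_norm] using hw))
      _ (hmem z₂ (mem_closedBall_self hδ.le))
    simp only [Prod.mk_sub_mk, sub_self, add_sub_cancel_left] at key
    calc _ ≤ ‖fderiv ℝ F (x, z₂ + w) - fderiv ℝ F (x, z₂) - D2 (0, w)‖ * ‖inl ℝ E E‖ :=
          opNorm_comp_le _ _
      _ ≤ ε * ‖w‖ * 1 := by
          gcongr
          · exact key.trans_eq (congrArg (ε * ·) (by simp))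
          · exact norm_inl_le_one ℝ E E
      _ = ε * ‖w‖ := mul_one _
  have := (convex_closedBall z₁ δ).norm_image_sub_le_of_norm_hasFDerivWithin_le hderiv hbound
    (mem_closedBall_self hδ.le) (y := z₁ + v) (by simpa [mem_closedBall_iff_norm] using hv)
  have hlin : D2 (0, w) (z₁ + v, 0) = D2 (0, w) (z₁, 0) + D2 (0, w) (v, 0) := by
    rw [← map_add, Prod.mk_add_mk, add_zero]
  simp only [hlin, add_sub_cancel_left] at this
  refine le_of_eq_of_le ?_ (this.trans_eq (by ring))
  congr 1
  simp only [flip_apply, bilinearComp_apply, inr_apply, inl_apply]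
  abel

theorem fderiv_fderiv_partial_apply {F : E × E → G} (hF : Differentiable ℝ F) {x₀ y₀ : E}
    (hF' : DifferentiableAt ℝ (fderiv ℝ F) (x₀, y₀)) (u v : E) :
    fderiv ℝ (fun y => fderiv ℝ (fun x => F (x, y)) x₀ u) y₀ v
      = fderiv ℝ (fderiv ℝ F) (x₀, y₀) (0, v) (u, 0) := by
  have hpartial :
      (fun y => fderiv ℝ (fun x => F (x, y)) x₀ u) = fun y => fderiv ℝ F (x₀, y) (u, 0) := by
    funext y
    exact congrArg (· u)
      ((hF (x₀, y)).hasFDerivAt.comp x₀ (hasFDerivAt_prodMk_left (𝕜 := ℝ) x₀ y)).fderiv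
  have hy : HasFDerivAt (fun y => fderiv ℝ F (x₀, y) (u, 0))
      ((apply ℝ G ((u, 0) : E × E)).comp ((fderiv ℝ (fderiv ℝ F) (x₀, y₀)).comp (inr ℝ E E))) y₀ :=
    (apply ℝ G ((u, 0) : E × E)).hasFDerivAt.comp y₀
      (hF'.hasFDerivAt.comp y₀ (hasFDerivAt_prodMk_right (𝕜 := ℝ) x₀ y₀))
  rw [hpartial, hy.fderiv]
  rfl

end MixedSecondDifference

section GramFeatureMap

variable {W : Type*} [NormedAddCommGroup W] [InnerProductSpace ℝ W]

theorem cauchy_map_of_tendsto_inner {α : Type*} {l : Filter α} [l.NeBot] {u : α → W} {c : ℝ}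
    (hu : Tendsto (fun p : α × α => ⟪u p.1, u p.2⟫) (l ×ˢ l) (𝓝 c)) : Cauchy (map u l) := by
  refine cauchy_map_iff.2 ⟨inferInstance, tendsto_uniformity_iff_dist_tendsto_zero.2 ?_⟩
  have hsq : Tendsto (fun p : α × α => ‖u p.1 - u p.2‖ ^ 2) (l ×ˢ l) (𝓝 0) := by
    have h₁ : Tendsto (fun p : α × α => ⟪u p.1, u p.1⟫) (l ×ˢ l) (𝓝 c) :=
      hu.comp (tendsto_fst.prodMk tendsto_fst)
    have h₂ : Tendsto (fun p : α × α => ⟪u p.2, u p.2⟫) (l ×ˢ l) (𝓝 c) :=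
      hu.comp (tendsto_snd.prodMk tendsto_snd)
    convert (h₁.sub (hu.const_mul 2)).add h₂ using 1
    · funext p
      simp only [norm_sub_sq_real, real_inner_self_eq_norm_sq]
    · ring_nf
  simpa [dist_eq_norm, Real.sqrt_sq (norm_nonneg _)] using hsq.sqrt

theorem exists_continuousLinearMap_of_inner_eq {E : Type*} [NormedAddCommGroup E]
    [NormedSpace ℝ E] (B : E →L[ℝ] E →L[ℝ] ℝ) (D : E → W) (hD : ∀ x y, ⟪D x, D y⟫ = B x y) :
    ∃ L : E →L[ℝ] W, ⇑L = D := by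
  have hzero : ∀ a b : W, ⟪a - b, a - b⟫ = 0 → a = b := fun a b h =>
    sub_eq_zero.1 (inner_self_eq_zero.1 h)
  have hadd : ∀ x y, D (x + y) = D x + D y := fun x y => hzero _ _ <| by
    simp only [inner_sub_left, inner_sub_right, inner_add_left, inner_add_right, hD, map_add,
      add_apply]
    ring
  have hsmul : ∀ (a : ℝ) x, D (a • x) = a • D x := fun a x => hzero _ _ <| by
    simp only [inner_sub_left, inner_sub_right, real_inner_smul_left, real_inner_smul_right, hD,
      map_smul, smul_apply, smul_eq_mul]
    ring
  have hbound : ∀ x, ‖D x‖ ≤ √‖B‖ * ‖x‖ := fun x => by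
    rw [← Real.sqrt_sq (norm_nonneg (D x)), ← Real.sqrt_sq (norm_nonneg x), ← Real.sqrt_mul
      (norm_nonneg B), ← real_inner_self_eq_norm_sq, hD]
    refine Real.sqrt_le_sqrt ((le_abs_self _).trans ?_)
    simpa [sq, mul_assoc] using B.le_opNorm₂ x x
  exact ⟨LinearMap.mkContinuous ⟨⟨D, hadd⟩, hsmul⟩ _ hbound, rfl⟩

variable {E : Type*} [NormedAddCommGroup E] [NormedSpace ℝ E] {Φ : E → W}
  {B : E →L[ℝ] E →L[ℝ] ℝ} {z₁ z₂ : E}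

theorem eventually_ne_and_norm_smul_le (h : E) {δ : ℝ} (hδ : 0 < δ) :
    ∀ᶠ t in 𝓝[≠] (0 : ℝ), t ≠ 0 ∧ ‖t • h‖ ≤ δ := by
  have hne : ∀ᶠ t in 𝓝[≠] (0 : ℝ), t ≠ 0 := self_mem_nhdsWithin
  have hsmall : Tendsto (fun t : ℝ => ‖t • h‖) (𝓝 0) (𝓝 0) := by
    simpa using (by fun_prop : Continuous fun t : ℝ => ‖t • h‖).tendsto 0
  exact hne.and (nhdsWithin_le_nhds (hsmall.eventually (Iic_mem_nhds hδ)))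

theorem HasMixedSecondDiffAt.abs_inner_slope_sub_le
    (hB : HasMixedSecondDiffAt (fun x y => ⟪Φ x, Φ y⟫) B z₁ z₂) {ε : ℝ} (hε : 0 < ε) :
    ∃ δ > 0, ∀ (h₁ h₂ : E) (s t : ℝ), s ≠ 0 → t ≠ 0 → ‖s • h₁‖ ≤ δ → ‖t • h₂‖ ≤ δ →
      |⟪slope (fun s => Φ (z₁ + s • h₁)) 0 s, slope (fun t => Φ (z₂ + t • h₂)) 0 t⟫ - B h₁ h₂|
        ≤ ε * (‖h₁‖ * ‖h₂‖) := by
  obtain ⟨δ, hδ, hest⟩ := hB ε hε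
  refine ⟨δ, hδ, fun h₁ h₂ s t hs ht hs' ht' => ?_⟩
  have key := hest _ _ hs' ht'
  have hinner : ⟪Φ (z₁ + s • h₁) - Φ z₁, Φ (z₂ + t • h₂) - Φ z₂⟫
      = ⟪Φ (z₁ + s • h₁), Φ (z₂ + t • h₂)⟫ - ⟪Φ (z₁ + s • h₁), Φ z₂⟫ - ⟪Φ z₁, Φ (z₂ + t • h₂)⟫
        + ⟪Φ z₁, Φ z₂⟫ := by
    simp only [inner_sub_left, inner_sub_right]
    ring
  rw [← hinner, Real.norm_eq_abs, map_smul, map_smul, smul_apply, smul_eq_mul, smul_eq_mul,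
    norm_smul, norm_smul, Real.norm_eq_abs, Real.norm_eq_abs] at key
  simp only [slope_def_module, sub_zero, zero_smul, add_zero, real_inner_smul_left,
    real_inner_smul_right]
  have hst : 0 < |s| * |t| := by positivity
  rw [← mul_le_mul_iff_of_pos_left hst]
  calc |s| * |t| * |t⁻¹ * (s⁻¹ * ⟪Φ (z₁ + s • h₁) - Φ z₁, Φ (z₂ + t • h₂) - Φ z₂⟫) - B h₁ h₂|
      = |⟪Φ (z₁ + s • h₁) - Φ z₁, Φ (z₂ + t • h₂) - Φ z₂⟫ - t * (s * B h₁ h₂)| := by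
        rw [← abs_mul, ← abs_mul]
        congr 1
        field_simp
    _ ≤ ε * (|s| * ‖h₁‖ * (|t| * ‖h₂‖)) := key
    _ = |s| * |t| * (ε * (‖h₁‖ * ‖h₂‖)) := by ring

theorem HasMixedSecondDiffAt.tendsto_inner_slope
    (hB : HasMixedSecondDiffAt (fun x y => ⟪Φ x, Φ y⟫) B z₁ z₂) (h₁ h₂ : E) :
    Tendsto (fun p : ℝ × ℝ =>
        ⟪slope (fun s => Φ (z₁ + s • h₁)) 0 p.1, slope (fun t => Φ (z₂ + t • h₂)) 0 p.2⟫)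
      (𝓝[≠] 0 ×ˢ 𝓝[≠] 0) (𝓝 (B h₁ h₂)) := by
  refine Metric.tendsto_nhds.2 fun ε hε => ?_
  set M := ‖h₁‖ * ‖h₂‖
  obtain ⟨δ, hδ, hest⟩ := hB.abs_inner_slope_sub_le (ε := ε / (M + 1)) (by positivity)
  filter_upwards [(eventually_ne_and_norm_smul_le h₁ hδ).prod_mk
    (eventually_ne_and_norm_smul_le h₂ hδ)] with p ⟨⟨hs, hs'⟩, ht, ht'⟩
  calc _ ≤ ε / (M + 1) * M := hest h₁ h₂ p.1 p.2 hs ht hs' ht'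
    _ < ε := by
      rw [div_mul_eq_mul_div, div_lt_iff₀ (by positivity)]
      nlinarith

theorem HasMixedSecondDiffAt.inner_eq_of_tendsto
    (hB : HasMixedSecondDiffAt (fun x y => ⟪Φ x, Φ y⟫) B z₁ z₂) {h₁ h₂ : E} {x₁ x₂ : W}
    (hx₁ : Tendsto (slope (fun s : ℝ => Φ (z₁ + s • h₁)) 0) (𝓝[≠] 0) (𝓝 x₁))
    (hx₂ : Tendsto (slope (fun t : ℝ => Φ (z₂ + t • h₂)) 0) (𝓝[≠] 0) (𝓝 x₂)) :
    ⟪x₁, x₂⟫ = B h₁ h₂ :=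
  tendsto_nhds_unique ((hx₁.comp tendsto_fst).inner (hx₂.comp tendsto_snd))
    (hB.tendsto_inner_slope h₁ h₂)

theorem HasMixedSecondDiffAt.hasFDerivAt {z : E} {L : E →L[ℝ] W}
    (hB : HasMixedSecondDiffAt (fun x y => ⟪Φ x, Φ y⟫) B z z)
    (hL : ∀ h, Tendsto (slope (fun t : ℝ => Φ (z + t • h)) 0) (𝓝[≠] 0) (𝓝 (L h))) :
    HasFDerivAt Φ L z := by
  rw [hasFDerivAt_iff_isLittleO_nhds_zero, Asymptotics.isLittleO_iff]
  intro c hc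
  obtain ⟨δ, hδ, hest⟩ := hB.abs_inner_slope_sub_le (ε := c ^ 2 / 3) (by positivity)
  filter_upwards [closedBall_mem_nhds (0 : E) hδ] with h hh
  rw [mem_closedBall_zero_iff] at hh
  set Δ := Φ (z + h) - Φ z
  have hΔ : slope (fun t : ℝ => Φ (z + t • h)) 0 1 = Δ := by simp [slope_def_module, Δ]
  have hΔΔ : |⟪Δ, Δ⟫ - B h h| ≤ c ^ 2 / 3 * (‖h‖ * ‖h‖) := by
    simpa only [hΔ] using hest h h 1 1 one_ne_zero one_ne_zero (by simpa using hh)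
      (by simpa using hh)
  have hΔL : |⟪Δ, L h⟫ - B h h| ≤ c ^ 2 / 3 * (‖h‖ * ‖h‖) := by
    refine le_of_tendsto ((tendsto_const_nhds.inner (hL h)).sub_const _).abs ?_
    filter_upwards [eventually_ne_and_norm_smul_le h hδ] with t ⟨ht, ht'⟩
    simpa only [hΔ] using hest h h 1 t one_ne_zero ht (by simpa using hh) ht'
  have hLL : ⟪L h, L h⟫ = B h h := hB.inner_eq_of_tendsto (hL h) (hL h)
  have hsq : ‖Δ - L h‖ ^ 2 ≤ (c * ‖h‖) ^ 2 := by
    rw [norm_sub_sq_real, ← real_inner_self_eq_norm_sq, ← real_inner_self_eq_norm_sq, hLL]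
    have := abs_le.1 hΔΔ
    have := abs_le.1 hΔL
    nlinarith
  exact (pow_le_pow_iff_left₀ (norm_nonneg _) (by positivity) two_ne_zero).1 hsq

theorem exists_hasFDerivAt_of_hasMixedSecondDiffAt [CompleteSpace W]
    {B : E → E → E →L[ℝ] E →L[ℝ] ℝ}
    (hB : ∀ z₁ z₂, HasMixedSecondDiffAt (fun x y => ⟪Φ x, Φ y⟫) (B z₁ z₂) z₁ z₂) :
    ∃ L : E → E →L[ℝ] W,
      (∀ z, HasFDerivAt Φ (L z) z) ∧ ∀ z₁ z₂ h₁ h₂, ⟪L z₁ h₁, L z₂ h₂⟫ = B z₁ z₂ h₁ h₂ := by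
  have hlim : ∀ z h, ∃ x, Tendsto (slope (fun t : ℝ => Φ (z + t • h)) 0) (𝓝[≠] 0) (𝓝 x) :=
    fun z h => cauchy_map_iff_exists_tendsto.1
      (cauchy_map_of_tendsto_inner ((hB z z).tendsto_inner_slope h h))
  choose D hD using hlim
  have hgram : ∀ z₁ z₂ h₁ h₂, ⟪D z₁ h₁, D z₂ h₂⟫ = B z₁ z₂ h₁ h₂ := fun z₁ z₂ _ _ =>
    (hB z₁ z₂).inner_eq_of_tendsto (hD _ _) (hD _ _)
  choose L hL using fun z => exists_continuousLinearMap_of_inner_eq (B z z) (D z) (hgram z z)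
  refine ⟨L, fun z => (hB z z).hasFDerivAt fun h => ?_, fun z₁ z₂ h₁ h₂ => ?_⟩
  · simpa only [hL] using hD z h
  · simpa only [hL] using hgram z₁ z₂ h₁ h₂

end GramFeatureMap

theorem stmt12_general (W : Type*) [NormedAddCommGroup W] [InnerProductSpace ℝ W]
    [CompleteSpace W] (d : ℕ)
    (KW : EuclideanSpace ℝ (Fin d) → EuclideanSpace ℝ (Fin d) → ℝ)
    (hKW : ContDiff ℝ 2 (fun zz : EuclideanSpace ℝ (Fin d) × EuclideanSpace ℝ (Fin d) =>
      KW zz.1 zz.2))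
    (Φ : EuclideanSpace ℝ (Fin d) → W)
    (hΦ : ∀ z1 z2 : EuclideanSpace ℝ (Fin d), ⟪Φ z1, Φ z2⟫ = KW z1 z2) :
    (∀ z : EuclideanSpace ℝ (Fin d), DifferentiableAt ℝ Φ z) ∧
    (∀ z1 z2 h1 h2 : EuclideanSpace ℝ (Fin d),
      ⟪fderiv ℝ Φ z1 h1, fderiv ℝ Φ z2 h2⟫ = mixedDeriv KW z1 z2 h1 h2) := by
  have hkernel : (fun x y => ⟪Φ x, Φ y⟫) = KW := funext fun x => funext (hΦ x)
  obtain ⟨L, hL, hgram⟩ := exists_hasFDerivAt_of_hasMixedSecondDiffAt (Φ := Φ)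
    fun z₁ z₂ => by rw [hkernel]; exact hKW.hasMixedSecondDiffAt z₁ z₂
  refine ⟨fun z => (hL z).differentiableAt, fun z₁ z₂ h₁ h₂ => ?_⟩
  rw [(hL z₁).fderiv, (hL z₂).fderiv, hgram]
  exact (fderiv_fderiv_partial_apply (hKW.differentiable (by norm_num))
    ((hKW.fderiv_right (m := 1) (by norm_num)).differentiable one_ne_zero _) h₁ h₂).symm

/-- differentiability of the kernel feature map, with the Gram
identity for its differential. -/
theorem stmt12 (W : Type*) [NormedAddCommGroup W] [InnerProductSpace ℝ W]
    [CompleteSpace W] (d : ℕ) (hd : 1 ≤ d)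
    (KW : EuclideanSpace ℝ (Fin d) → EuclideanSpace ℝ (Fin d) → ℝ)
    (hKW : ContDiff ℝ 2 (fun zz : EuclideanSpace ℝ (Fin d) × EuclideanSpace ℝ (Fin d) =>
      KW zz.1 zz.2))
    (Φ : EuclideanSpace ℝ (Fin d) → W)
    (hΦ : ∀ z1 z2 : EuclideanSpace ℝ (Fin d), ⟪Φ z1, Φ z2⟫ = KW z1 z2) :
    (∀ z : EuclideanSpace ℝ (Fin d), DifferentiableAt ℝ Φ z) ∧
    (∀ z1 z2 h1 h2 : EuclideanSpace ℝ (Fin d),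
      ⟪fderiv ℝ Φ z1 h1, fderiv ℝ Φ z2 h2⟫ = mixedDeriv KW z1 z2 h1 h2) :=
  stmt12_general W d KW hKW Φ hΦ

end
end
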